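/- Cartier decomposition of the product of cubical integrands (Proposition 1.5): Let k = (k_1,…,k_p) and l = (l_1,…,l_q) be tuples of positive integers, n = k_1+…+k_p, m = l_1+…+l_q. Then for all (x_1,…,x_n) ∈ (0,1)^n and (x'_1,…,x'_m) ∈ (0,1)^m one has the identity f_k(x_1,…,x_n) · f_l(x'_1,…,x'_m) = Σ_{σ ∈ st(k,l)} f_σ(y_σ), where for each stuffle term σ the argument y_σ is the sequence of the n+m variables obtained by placing, for each part of σ, the corresponding block of x-variables (for a part k_i), the corresponding block of x'-variables (for a part l_j), or the block of x-variables for k_i followed by the block of x'-variables for l_j (for a merged part k_i + l_j). -/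

import Mathlib

/-- The cubical integrand
`f_k(x₁,…,x_n) = ∏_{i=1}^p (x₁⋯x_{K_{i−1}})/(1 − x₁⋯x_{K_i})`, where
`K_i = k₁ + … + k_i` (indices of the variables starting at `0`). -/
noncomputable def fk (k : List ℕ) (x : ℕ → ℝ) : ℝ :=
  ∏ i ∈ Finset.range k.length,
    (∏ j ∈ Finset.range ((k.take i).sum), x j) /
      (1 - ∏ j ∈ Finset.range ((k.take (i + 1)).sum), x j)

/-- Generic stuffle product of two lists, with a given merging operation, defined by
recursion on the *first* entries.  The stuffle of the paper, defined by recursion on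
the *last* entries, is obtained by reversing. -/
def stuffleMAux {α : Type*} (merge : α → α → α) : List α → List α → Multiset (List α)
  | [], l => {l}
  | k, [] => {k}
  | a :: as, b :: bs =>
      (stuffleMAux merge as (b :: bs)).map (a :: ·) +
      (stuffleMAux merge (a :: as) bs).map (b :: ·) +
      (stuffleMAux merge as bs).map (merge a b :: ·)
termination_by k l => k.length + l.length
decreasing_by all_goals simp +arith +decide

/-- The multiset of individual terms of the stuffle product of two *decorated*
tuples: each part carries its size together with the ordered block of (real)
variables attached to it; merging two parts adds the sizes and concatenates the
block of `x`-variables (coming from `k`) with the block of `x'`-variables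
(coming from `l`), in this order. -/
def stuffleDec {β : Type*} (d e : List (ℕ × List β)) : Multiset (List (ℕ × List β)) :=
  (stuffleMAux (fun p q => (p.1 + q.1, p.2 ++ q.2)) d.reverse e.reverse).map List.reverse

/-- The decoration of the tuple `k = (k₁,…,k_p)` by the variables `x`: the `i`-th part
`k_i` is paired with its block `(x_{K_{i−1}}, …, x_{K_i − 1})` of variables. -/
def blocks {β : Type*} : List ℕ → (ℕ → β) → List (ℕ × List β)
  | [], _ => []
  | a :: as, x => (a, (List.range a).map x) :: blocks as fun j => x (a + j)

/-- `f_σ(y_σ)` for a decorated stuffle term `σ`: the value of `f` on the underlying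
composition, evaluated at the concatenation of the variable blocks. -/
noncomputable def fdec (d : List (ℕ × List ℝ)) : ℝ :=
  fk (d.map Prod.fst) fun j => ((d.map Prod.snd).flatten).getD j 0

/-! Reading the tuples from their last part, `f_{k·a}(x) = f_k(x) · P/(1 − P·t)` where `P` is
the product of the variables of `k` and `t` the product of the block of `a`. The stuffle product
obeys the same recursion on last parts, so the decomposition follows by induction once the
three stuffle terms ending in `a`, in `b` and in `a + b` are collected; with `A`, `B` the full
products of the two sides this is the identity
`1/((1 − A)(1 − B)) = (A/(1 − A) + B/(1 − B) + 1)/(1 − AB)`. -/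

section Stuffle

variable {α : Type*} (merge : α → α → α)

theorem mem_of_mem_stuffleMAux {d e σ : List α} (hσ : σ ∈ stuffleMAux merge d e) {p : α}
    (hp : p ∈ σ) : p ∈ d ∨ p ∈ e ∨ ∃ a ∈ d, ∃ b ∈ e, p = merge a b := by
  induction d, e using stuffleMAux.induct generalizing σ with
  | case1 l =>
    rw [stuffleMAux.eq_1, Multiset.mem_singleton] at hσ
    exact .inr (.inl (hσ ▸ hp))
  | case2 k hk =>
    rw [stuffleMAux.eq_2 merge k hk, Multiset.mem_singleton] at hσ
    exact .inl (hσ ▸ hp)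
  | case3 a as b bs ih₁ ih₂ ih₃ =>
    rw [stuffleMAux] at hσ
    simp only [Multiset.mem_add, Multiset.mem_map] at hσ
    rcases hσ with (⟨τ, hτ, rfl⟩ | ⟨τ, hτ, rfl⟩) | ⟨τ, hτ, rfl⟩ <;>
      rcases List.mem_cons.mp hp with rfl | hp
    · simp
    · rcases ih₁ hτ hp with h | h | ⟨a', ha', b', hb', rfl⟩ <;> grind
    · simp
    · rcases ih₂ hτ hp with h | h | ⟨a', ha', b', hb', rfl⟩ <;> grind
    · exact .inr (.inr ⟨a, by simp, b, by simp, rfl⟩)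
    · rcases ih₃ hτ hp with h | h | ⟨a', ha', b', hb', rfl⟩ <;> grind

theorem prod_map_of_mem_stuffleMAux {M : Type*} [CommMonoid M] {w : α → M}
    (hw : ∀ a b, w (merge a b) = w a * w b) {d e σ : List α}
    (hσ : σ ∈ stuffleMAux merge d e) :
    (σ.map w).prod = (d.map w).prod * (e.map w).prod := by
  induction d, e using stuffleMAux.induct generalizing σ with
  | case1 l =>
    rw [stuffleMAux.eq_1, Multiset.mem_singleton] at hσ
    simp [hσ]
  | case2 k hk =>
    rw [stuffleMAux.eq_2 merge k hk, Multiset.mem_singleton] at hσ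
    simp [hσ]
  | case3 a as b bs ih₁ ih₂ ih₃ =>
    rw [stuffleMAux] at hσ
    simp only [Multiset.mem_add, Multiset.mem_map] at hσ
    rcases hσ with (⟨τ, hτ, rfl⟩ | ⟨τ, hτ, rfl⟩) | ⟨τ, hτ, rfl⟩
    · simp only [List.map_cons, List.prod_cons, ih₁ hτ]; ac_rfl
    · simp only [List.map_cons, List.prod_cons, ih₂ hτ]; ac_rfl
    · simp only [List.map_cons, List.prod_cons, ih₃ hτ, hw]; ac_rfl

end Stuffle

theorem abs_list_prod_le_one {R : Type*} [CommRing R] [LinearOrder R] [IsStrictOrderedRing R]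
    {l : List R} (h : ∀ y ∈ l, |y| ≤ 1) : |l.prod| ≤ 1 := by
  induction l with
  | nil => simp
  | cons a t ih =>
    rw [List.prod_cons, abs_mul]
    exact mul_le_one₀ (h a (by simp)) (abs_nonneg _) (ih fun y hy => h y (by simp [hy]))

theorem abs_list_prod_lt_one {R : Type*} [CommRing R] [LinearOrder R] [IsStrictOrderedRing R]
    {l : List R} (hl : l ≠ []) (h : ∀ y ∈ l, |y| < 1) : |l.prod| < 1 := by
  obtain ⟨a, t, rfl⟩ := List.exists_cons_of_ne_nil hl
  rw [List.prod_cons, abs_mul]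
  exact mul_lt_one_of_nonneg_of_lt_one_left (abs_nonneg _) (h a (by simp))
    (abs_list_prod_le_one fun y hy => (h y (by simp [hy])).le)

/-- The case `p = q = 1` of the decomposition: expanding both sides as `∑ Aⁱ Bʲ`, the three
terms on the right collect the pairs with `i > j`, `i < j` and `i = j`. -/
theorem inv_one_sub_mul_inv_one_sub {K : Type*} [Field K] {A B : K} (hA : 1 - A ≠ 0)
    (hB : 1 - B ≠ 0) (hAB : 1 - A * B ≠ 0) :
    (1 - A)⁻¹ * (1 - B)⁻¹ = (A / (1 - A) + B / (1 - B) + 1) / (1 - A * B) := by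
  field_simp
  ring

theorem prod_range_getD {M : Type*} [CommMonoid M] (w : List M) (m : M) :
    ∏ j ∈ Finset.range w.length, w.getD j m = w.prod := by
  induction w with
  | nil => simp
  | cons a t ih =>
    rw [List.length_cons, Finset.prod_range_succ', List.prod_cons, mul_comm]
    simp only [List.getD_cons_succ, List.getD_cons_zero, ih]

theorem prod_range_getD_append {M : Type*} [CommMonoid M] (w v : List M) (m : M) :
    ∏ j ∈ Finset.range w.length, (w ++ v).getD j m = w.prod := by
  rw [← prod_range_getD w m]
  exact Finset.prod_congr rfl fun j hj => List.getD_append _ _ _ _ (Finset.mem_range.mp hj)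

theorem fk_congr {k : List ℕ} {x y : ℕ → ℝ} (h : ∀ j < k.sum, x j = y j) :
    fk k x = fk k y := by
  have hrange : ∀ m, ∀ j ∈ Finset.range (k.take m).sum, x j = y j := fun m j hj =>
    h j ((Finset.mem_range.mp hj).trans_le
      ((List.take_sublist m k).sum_le_sum fun _ _ => Nat.zero_le _))
  unfold fk
  refine Finset.prod_congr rfl fun i _ => ?_
  rw [Finset.prod_congr rfl (hrange i), Finset.prod_congr rfl (hrange (i + 1))]

theorem fk_append_singleton (k : List ℕ) (a : ℕ) (x : ℕ → ℝ) :
    fk (k ++ [a]) x = fk k x * ((∏ j ∈ Finset.range k.sum, x j) /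
      (1 - ∏ j ∈ Finset.range (k.sum + a), x j)) := by
  unfold fk
  rw [List.length_append, List.length_singleton, Finset.prod_range_succ]
  congr 1
  · refine Finset.prod_congr rfl fun i hi => ?_
    have hi := Finset.mem_range.mp hi
    rw [List.take_append_of_le_length hi.le, List.take_append_of_le_length hi]
  · rw [List.take_append_of_le_length le_rfl, List.take_length,
      List.take_of_length_le (by simp), List.sum_append, List.sum_singleton]

def mergeBlocks {β : Type*} (p q : ℕ × List β) : ℕ × List β := (p.1 + q.1, p.2 ++ q.2)

theorem stuffleDec_eq {β : Type*} (d e : List (ℕ × List β)) :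
    stuffleDec d e = (stuffleMAux mergeBlocks d.reverse e.reverse).map List.reverse :=
  rfl

/-- `|p.2.prod| < 1` keeps every denominator `1 − ∏ x_j` met in the recursion away from `0`. -/
structure IsAdmissibleBlock (p : ℕ × List ℝ) : Prop where
  length_eq : p.2.length = p.1
  abs_prod_lt_one : |p.2.prod| < 1

theorem IsAdmissibleBlock.mergeBlocks {p q : ℕ × List ℝ} (hp : IsAdmissibleBlock p)
    (hq : IsAdmissibleBlock q) : IsAdmissibleBlock (mergeBlocks p q) where
  length_eq := by simp [_root_.mergeBlocks, hp.length_eq, hq.length_eq]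
  abs_prod_lt_one := by
    rw [_root_.mergeBlocks, List.prod_append, abs_mul]
    exact mul_lt_one_of_nonneg_of_lt_one_left (abs_nonneg _) hp.abs_prod_lt_one
      hq.abs_prod_lt_one.le

theorem isAdmissibleBlock_of_mem_stuffleMAux {d e σ : List (ℕ × List ℝ)}
    (hd : ∀ p ∈ d, IsAdmissibleBlock p) (he : ∀ p ∈ e, IsAdmissibleBlock p)
    (hσ : σ ∈ stuffleMAux mergeBlocks d e) : ∀ p ∈ σ, IsAdmissibleBlock p := by
  intro p hp
  rcases mem_of_mem_stuffleMAux mergeBlocks hσ hp with h | h | ⟨a, ha, b, hb, rfl⟩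
  exacts [hd p h, he p h, (hd a ha).mergeBlocks (he b hb)]

noncomputable def varProd (d : List (ℕ × List ℝ)) : ℝ := (d.map fun p => p.2.prod).prod

theorem varProd_eq_prod_flatten (d : List (ℕ × List ℝ)) :
    varProd d = ((d.map Prod.snd).flatten).prod := by
  rw [List.prod_flatten, List.map_map]
  rfl

theorem abs_varProd_le_one {d : List (ℕ × List ℝ)} (hd : ∀ p ∈ d, IsAdmissibleBlock p) :
    |varProd d| ≤ 1 :=
  abs_list_prod_le_one <| List.forall_mem_map.mpr fun p hp => (hd p hp).abs_prod_lt_one.le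

theorem varProd_of_mem_stuffleMAux {d e σ : List (ℕ × List ℝ)}
    (hσ : σ ∈ stuffleMAux mergeBlocks d e) : varProd σ = varProd d * varProd e :=
  prod_map_of_mem_stuffleMAux mergeBlocks (fun _ _ => List.prod_append) hσ

theorem length_flatten_map_snd {d : List (ℕ × List ℝ)} (hd : ∀ p ∈ d, p.2.length = p.1) :
    ((d.map Prod.snd).flatten).length = (d.map Prod.fst).sum := by
  rw [List.length_flatten, List.map_map]
  exact congrArg List.sum (List.map_congr_left hd)

theorem fdec_append_singleton {d : List (ℕ × List ℝ)} {a : ℕ × List ℝ}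
    (hd : ∀ p ∈ d, p.2.length = p.1) (ha : a.2.length = a.1) :
    fdec (d ++ [a]) = fdec d * (varProd d / (1 - varProd d * a.2.prod)) := by
  set w := (d.map Prod.snd).flatten
  have hfk : fk (d.map Prod.fst) (fun j => (w ++ a.2).getD j 0) = fdec d :=
    fk_congr fun j hj => List.getD_append _ _ _ _ (by rwa [length_flatten_map_snd hd])
  have hlen : (d.map Prod.fst).sum + a.1 = (w ++ a.2).length := by
    rw [List.length_append, length_flatten_map_snd hd, ha]
  simp only [fdec, List.map_append, List.map_cons, List.map_nil, List.flatten_append,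
    List.flatten_cons, List.flatten_nil, List.append_nil]
  rw [fk_append_singleton, hfk, hlen, prod_range_getD, ← length_flatten_map_snd hd,
    prod_range_getD_append, List.prod_append, varProd_eq_prod_flatten]
  rfl

theorem varProd_cons (a : ℕ × List ℝ) (d : List (ℕ × List ℝ)) :
    varProd (a :: d) = a.2.prod * varProd d := by
  simp [varProd]

theorem abs_varProd_cons_lt_one {a : ℕ × List ℝ} {d : List (ℕ × List ℝ)}
    (hd : ∀ p ∈ a :: d, IsAdmissibleBlock p) : |varProd (a :: d)| < 1 := by
  rw [varProd_cons, abs_mul]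
  exact mul_lt_one_of_nonneg_of_lt_one_left (abs_nonneg _)
    (hd a List.mem_cons_self).abs_prod_lt_one
    (abs_varProd_le_one fun p hp => hd p (List.mem_cons_of_mem a hp))

theorem fdec_reverse_cons {a : ℕ × List ℝ} {d : List (ℕ × List ℝ)}
    (ha : a.2.length = a.1) (hd : ∀ p ∈ d, p.2.length = p.1) :
    fdec (a :: d).reverse = fdec d.reverse * (varProd d / (1 - varProd d * a.2.prod)) := by
  rw [List.reverse_cons, fdec_append_singleton (fun p hp => hd p (List.mem_reverse.mp hp)) ha]
  simp [varProd, List.map_reverse, List.prod_reverse]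

theorem sum_map_fdec_reverse_cons_of_stuffleMAux {d e : List (ℕ × List ℝ)}
    (hd : ∀ p ∈ d, IsAdmissibleBlock p) (he : ∀ p ∈ e, IsAdmissibleBlock p)
    {a : ℕ × List ℝ} (ha : a.2.length = a.1) :
    ((stuffleMAux mergeBlocks d e).map fun τ => fdec (a :: τ).reverse).sum
      = ((stuffleMAux mergeBlocks d e).map fun τ => fdec τ.reverse).sum *
          (varProd d * varProd e / (1 - varProd d * varProd e * a.2.prod)) := by
  rw [← Multiset.sum_map_mul_right]
  refine congrArg Multiset.sum (Multiset.map_congr rfl fun τ hτ => ?_)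
  have hτ_adm := isAdmissibleBlock_of_mem_stuffleMAux hd he hτ
  rw [fdec_reverse_cons ha fun p hp => (hτ_adm p hp).length_eq, varProd_of_mem_stuffleMAux hτ]

theorem fdec_reverse_mul_fdec_reverse {d e : List (ℕ × List ℝ)}
    (hd : ∀ p ∈ d, IsAdmissibleBlock p) (he : ∀ p ∈ e, IsAdmissibleBlock p) :
    fdec d.reverse * fdec e.reverse
      = ((stuffleMAux mergeBlocks d e).map fun σ => fdec σ.reverse).sum := by
  induction d, e using stuffleMAux.induct with
  | case1 l => simp [stuffleMAux.eq_1, fdec, fk]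
  | case2 k hk => simp [stuffleMAux.eq_2 _ k hk, fdec, fk]
  | case3 a as b bs ih₁ ih₂ ih₃ =>
    have ha := hd a List.mem_cons_self
    have hb := he b List.mem_cons_self
    have has : ∀ p ∈ as, IsAdmissibleBlock p := fun p hp => hd p (List.mem_cons_of_mem a hp)
    have hbs : ∀ p ∈ bs, IsAdmissibleBlock p := fun p hp => he p (List.mem_cons_of_mem b hp)
    have hA := abs_varProd_cons_lt_one hd
    have hB := abs_varProd_cons_lt_one he
    have hAB : |varProd (a :: as) * varProd (b :: bs)| < 1 := by
      rw [abs_mul]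
      exact mul_lt_one_of_nonneg_of_lt_one_left (abs_nonneg _) hA hB.le
    have one_sub_ne_zero {z : ℝ} (hz : |z| < 1) : 1 - z ≠ 0 :=
      sub_ne_zero.mpr (lt_of_abs_lt hz).ne'
    have key := inv_one_sub_mul_inv_one_sub (one_sub_ne_zero hA) (one_sub_ne_zero hB)
      (one_sub_ne_zero hAB)
    rw [stuffleMAux]
    simp only [Multiset.map_add, Multiset.sum_add, Multiset.map_map, Function.comp_def]
    rw [sum_map_fdec_reverse_cons_of_stuffleMAux has he ha.length_eq,
      sum_map_fdec_reverse_cons_of_stuffleMAux hd hbs hb.length_eq,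
      sum_map_fdec_reverse_cons_of_stuffleMAux has hbs (ha.mergeBlocks hb).length_eq,
      ← ih₁ has he, ← ih₂ hd hbs, ← ih₃ has hbs,
      fdec_reverse_cons ha.length_eq fun p hp => (has p hp).length_eq,
      fdec_reverse_cons hb.length_eq fun p hp => (hbs p hp).length_eq]
    simp only [varProd_cons, mergeBlocks, List.prod_append] at key ⊢
    linear_combination (fdec as.reverse * fdec bs.reverse * varProd as * varProd bs) * key

theorem blocks_map_fst {β : Type*} (k : List ℕ) (x : ℕ → β) :
    (blocks k x).map Prod.fst = k := by
  induction k generalizing x with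
  | nil => rfl
  | cons a as ih => simp [blocks, ih]

theorem flatten_map_snd_blocks {β : Type*} (k : List ℕ) (x : ℕ → β) :
    ((blocks k x).map Prod.snd).flatten = (List.range k.sum).map x := by
  induction k generalizing x with
  | nil => rfl
  | cons a as ih =>
    simp only [blocks, List.map_cons, List.flatten_cons, ih, List.sum_cons, List.range_add,
      List.map_append, List.map_map]
    rfl

theorem fk_eq_fdec_blocks (k : List ℕ) (x : ℕ → ℝ) : fk k x = fdec (blocks k x) := by
  unfold fdec
  rw [blocks_map_fst, flatten_map_snd_blocks]
  refine fk_congr fun j hj => ?_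
  rw [List.getD_eq_getElem _ _ (by simpa using hj)]
  simp

theorem isAdmissibleBlock_of_mem_blocks {k : List ℕ} {x : ℕ → ℝ} (hk : ∀ a ∈ k, 0 < a)
    (hx : ∀ j < k.sum, |x j| < 1) : ∀ p ∈ blocks k x, IsAdmissibleBlock p := by
  induction k generalizing x with
  | nil => simp [blocks]
  | cons a as ih =>
    rintro p (_ | ⟨_, hp⟩)
    · refine ⟨by simp, abs_list_prod_lt_one ?_ ?_⟩
      · simpa using (hk a List.mem_cons_self).ne'
      · simp only [List.mem_map, List.mem_range, forall_exists_index, and_imp]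
        rintro _ j hj rfl
        exact hx j (by simp only [List.sum_cons]; omega)
    · refine ih (fun b hb => hk b (List.mem_cons_of_mem a hb)) (fun j hj => ?_) p hp
      exact hx (a + j) (by simp only [List.sum_cons]; omega)

/-- **Cartier decomposition of the product of cubical integrands** (Proposition 1.5):
for tuples `k`, `l` of positive integers and variables `x ∈ (0,1)^n`, `x' ∈ (0,1)^m`
(`n = k₁+…+k_p`, `m = l₁+…+l_q`),
`f_k(x) · f_l(x') = ∑_{σ ∈ st(k,l)} f_σ(y_σ)`, where `y_σ` interleaves the blocks of
`x`- and `x'`-variables according to the stuffle term `σ`, a merged part `k_i + l_j`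
receiving the block of `k_i` followed by the block of `l_j`. -/
theorem cartier_decomposition (k l : List ℕ)
    (hk : ∀ a ∈ k, 0 < a) (hl : ∀ a ∈ l, 0 < a)
    (x x' : ℕ → ℝ)
    (hx : ∀ j < k.sum, x j ∈ Set.Ioo (0 : ℝ) 1)
    (hx' : ∀ j < l.sum, x' j ∈ Set.Ioo (0 : ℝ) 1) :
    fk k x * fk l x' = ((stuffleDec (blocks k x) (blocks l x')).map fdec).sum := by
  have abs_lt_one {y : ℝ} (hy : y ∈ Set.Ioo (0 : ℝ) 1) : |y| < 1 :=
    abs_lt.mpr ⟨by linarith [hy.1], hy.2⟩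
  have hmain := fdec_reverse_mul_fdec_reverse (d := (blocks k x).reverse)
    (e := (blocks l x').reverse)
    (fun p hp => isAdmissibleBlock_of_mem_blocks hk (fun j hj => abs_lt_one (hx j hj)) p
      (List.mem_reverse.mp hp))
    (fun p hp => isAdmissibleBlock_of_mem_blocks hl (fun j hj => abs_lt_one (hx' j hj)) p
      (List.mem_reverse.mp hp))
  rw [List.reverse_reverse, List.reverse_reverse] at hmain
  rw [fk_eq_fdec_blocks, fk_eq_fdec_blocks, hmain, stuffleDec_eq, Multiset.map_map, Function.comp_def]
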